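/- arXiv:1907.03341 — 6 statements merged into one kernel-verified Lean document; each statement's English description precedes it below -/
import Mathlib

section
/- For Λ = Σ⁻¹ where Σ = [[1, ρ], [ρ, 1]] with |ρ| < 1, the maps Π₁(ρ) and Π₂(ρ) preserve the quadratic form induced by Λ: for all vectors s, (Π₁ s)ᵀ Λ (Π₁ s) = sᵀ Λ s and (Π₂ s)ᵀ Λ (Π₂ s) = sᵀ Λ s. -/
open Matrix

theorem Pi_preserve_quadratic_form (ρ : ℝ) (hρ : |ρ| < 1)
    (Sig : Matrix (Fin 2) (Fin 2) ℝ) (hSig : Sig = !![1, ρ; ρ, 1])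
    (Λ : Matrix (Fin 2) (Fin 2) ℝ) (hΛ : Λ = Sig⁻¹)
    (s : Fin 2 → ℝ) :
    ((!![1, -2*ρ; 0, -1] : Matrix (Fin 2) (Fin 2) ℝ) *ᵥ s) ⬝ᵥ
      (Λ *ᵥ ((!![1, -2*ρ; 0, -1] : Matrix (Fin 2) (Fin 2) ℝ) *ᵥ s)) = s ⬝ᵥ (Λ *ᵥ s) ∧
    ((!![-1, 0; -2*ρ, 1] : Matrix (Fin 2) (Fin 2) ℝ) *ᵥ s) ⬝ᵥ
      (Λ *ᵥ ((!![-1, 0; -2*ρ, 1] : Matrix (Fin 2) (Fin 2) ℝ) *ᵥ s)) = s ⬝ᵥ (Λ *ᵥ s) := by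
  have hne : 1 - ρ^2 ≠ 0 := by nlinarith [abs_nonneg ρ, sq_abs ρ, sq_nonneg ρ]
  have hL : Λ = (1-ρ^2)⁻¹ • !![1, -ρ; -ρ, 1] := by
    rw [hΛ, hSig, Matrix.inv_eq_right_inv]
    ext i j
    fin_cases i <;> fin_cases j <;>
      simp [Matrix.mul_apply, Fin.sum_univ_two] <;> field_simp <;> ring
  subst hL
  constructor <;>
    · simp [Matrix.mulVec, dotProduct, Fin.sum_univ_two, Matrix.smul_apply]
      field_simp
      ring
end

section
/- Let 0 < |ρ| < 1 and let Q be the whitening matrix as above. Then the conjugated matrix Q Π₁(ρ) Q⁻¹ equals [[√(1-ρ²), -ρ], [-ρ, -√(1-ρ²)]] and Q Π₂(ρ) Q⁻¹ equals [[-√(1-ρ²), -ρ], [-ρ, √(1-ρ²)]]. -/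
open Matrix Real

theorem whitened_Pi_matrices (ρ : ℝ) (h0 : 0 < |ρ|) (h1 : |ρ| < 1)
    (q : ℝ) (hq : q = Real.sign ρ / Real.sqrt (2 * (1 - ρ^2) * (1 - Real.sqrt (1 - ρ^2))))
    (Q : Matrix (Fin 2) (Fin 2) ℝ)
    (hQ : Q = q • !![ρ, Real.sqrt (1 - ρ^2) - 1; Real.sqrt (1 - ρ^2) - 1, ρ]) :
    Q * !![1, -2*ρ; 0, -1] * Q⁻¹
      = !![Real.sqrt (1 - ρ^2), -ρ; -ρ, -Real.sqrt (1 - ρ^2)] ∧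
    Q * !![-1, 0; -2*ρ, 1] * Q⁻¹
      = !![-Real.sqrt (1 - ρ^2), -ρ; -ρ, Real.sqrt (1 - ρ^2)] := by
  have hρne : ρ ≠ 0 := by
    intro h; simp [h] at h0
  have h1ρ : (0:ℝ) < 1 - ρ^2 := by nlinarith [sq_abs ρ, abs_nonneg ρ]
  set s := Real.sqrt (1 - ρ^2) with hs_def
  have hs2 : s^2 = 1 - ρ^2 := Real.sq_sqrt h1ρ.le
  have hs_pos : 0 < s := Real.sqrt_pos.mpr h1ρ
  have hρ2 : 0 < ρ^2 := by positivity
  have hs_lt : s < 1 := by nlinarith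
  have hq_ne : q ≠ 0 := by
    rw [hq]
    apply div_ne_zero
    · exact fun h => hρne (Real.sign_eq_zero_iff.mp h)
    · exact ne_of_gt (Real.sqrt_pos.mpr (by nlinarith))
  have hdet : IsUnit (Q.det) := by
    rw [hQ, isUnit_iff_ne_zero]
    rw [Matrix.det_smul, Matrix.det_fin_two_of]
    simp only [Fintype.card_fin]
    have hq2 : 0 < q^2 := by positivity
    have hpos : 0 < ρ * ρ - (s - 1) * (s - 1) := by nlinarith
    positivity
  haveI := Q.invertibleOfIsUnitDet hdet
  constructor
  · rw [Matrix.mul_inv_eq_iff_eq_mul_of_invertible, hQ, Matrix.smul_mul, Matrix.mul_smul]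
    congr 1
    ext i j
    fin_cases i <;> fin_cases j <;>
      simp [Matrix.mul_apply, Fin.sum_univ_two] <;> nlinarith [hs2]
  · rw [Matrix.mul_inv_eq_iff_eq_mul_of_invertible, hQ, Matrix.smul_mul, Matrix.mul_smul]
    congr 1
    ext i j
    fin_cases i <;> fin_cases j <;>
      simp [Matrix.mul_apply, Fin.sum_univ_two] <;> nlinarith [hs2]
end

section
/- Let 0 < |ρ| < 1 and α = arccos(ρ). For a positive integer k, the k-th power of the product Π̂₂ Π̂₁ (where Π̂₁ = [[√(1-ρ²), -ρ], [-ρ, -√(1-ρ²)]] and Π̂₂ = [[-√(1-ρ²), -ρ], [-ρ, √(1-ρ²)]]) equals the identity matrix if and only if kα is an integer multiple of π; equivalently, if and only if ρ = cos(lπ/k) for some integer l. -/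
open Matrix Real

private noncomputable def Rot (θ : ℝ) : Matrix (Fin 2) (Fin 2) ℝ :=
  !![Real.cos θ, Real.sin θ; -Real.sin θ, Real.cos θ]

private lemma Rot_mul (a b : ℝ) : Rot a * Rot b = Rot (a + b) := by
  ext i j
  fin_cases i <;> fin_cases j <;>
    simp [Rot, Matrix.mul_apply, Fin.sum_univ_two, Real.cos_add, Real.sin_add] <;> ring

private lemma Rot_pow (a : ℝ) (k : ℕ) : (Rot a) ^ k = Rot (k * a) := by
  induction k with
  | zero =>
    ext i j
    fin_cases i <;> fin_cases j <;> simp [Rot]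
  | succ n ih =>
    rw [pow_succ, ih, Rot_mul]
    push_cast
    ring_nf

theorem whitened_product_pow_eq_one_iff (ρ : ℝ) (h0 : 0 < |ρ|) (h1 : |ρ| < 1)
    (α : ℝ) (hα : α = Real.arccos ρ) (k : ℕ) (hk : 0 < k) :
    (((!![-Real.sqrt (1 - ρ^2), -ρ; -ρ, Real.sqrt (1 - ρ^2)] : Matrix (Fin 2) (Fin 2) ℝ) *
        !![Real.sqrt (1 - ρ^2), -ρ; -ρ, -Real.sqrt (1 - ρ^2)]) ^ k = 1
      ↔ ∃ l : ℤ, (k : ℝ) * α = l * Real.pi) ∧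
    (((!![-Real.sqrt (1 - ρ^2), -ρ; -ρ, Real.sqrt (1 - ρ^2)] : Matrix (Fin 2) (Fin 2) ℝ) *
        !![Real.sqrt (1 - ρ^2), -ρ; -ρ, -Real.sqrt (1 - ρ^2)]) ^ k = 1
      ↔ ∃ l : ℤ, ρ = Real.cos (l * Real.pi / k)) := by
  have hρ1 : -1 ≤ ρ := by linarith [neg_abs_le ρ]
  have hρ2 : ρ ≤ 1 := by linarith [le_abs_self ρ]
  have hcos : Real.cos α = ρ := by rw [hα]; exact Real.cos_arccos hρ1 hρ2
  have hsin : Real.sin α = Real.sqrt (1 - ρ^2) := by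
    rw [hα, Real.sin_arccos]
  have hM : (!![-Real.sqrt (1 - ρ^2), -ρ; -ρ, Real.sqrt (1 - ρ^2)] : Matrix (Fin 2) (Fin 2) ℝ) *
        !![Real.sqrt (1 - ρ^2), -ρ; -ρ, -Real.sqrt (1 - ρ^2)] = Rot (2 * α) := by
    have hs2 : Real.sin α ^ 2 = 1 - ρ ^ 2 := by
      rw [hsin, Real.sq_sqrt]; nlinarith
    ext i j
    fin_cases i <;> fin_cases j <;>
      simp [Rot, Matrix.mul_apply, Fin.sum_univ_two, Real.cos_two_mul, Real.sin_two_mul,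
        hcos, ← hsin] <;> nlinarith [hs2]
  have hkne : (k : ℝ) ≠ 0 := by positivity
  have key : ((!![-Real.sqrt (1 - ρ^2), -ρ; -ρ, Real.sqrt (1 - ρ^2)] : Matrix (Fin 2) (Fin 2) ℝ) *
        !![Real.sqrt (1 - ρ^2), -ρ; -ρ, -Real.sqrt (1 - ρ^2)]) ^ k = 1
      ↔ ∃ l : ℤ, (k : ℝ) * α = l * Real.pi := by
    rw [hM, Rot_pow]
    constructor
    · intro h
      have hc : Real.cos ((k : ℝ) * (2 * α)) = 1 := by
        have := congrFun (congrFun h 0) 0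
        simpa [Rot] using this
      obtain ⟨n, hn⟩ := (Real.cos_eq_one_iff _).1 hc
      exact ⟨n, by nlinarith⟩
    · rintro ⟨l, hl⟩
      have h2 : (k : ℝ) * (2 * α) = (l : ℝ) * (2 * Real.pi) := by nlinarith
      have hc : Real.cos ((k : ℝ) * (2 * α)) = 1 := (Real.cos_eq_one_iff _).2 ⟨l, h2.symm⟩
      have hs : Real.sin ((k : ℝ) * (2 * α)) = 0 := by
        rw [h2]
        have : (l : ℝ) * (2 * Real.pi) = 2 * l * Real.pi := by ring
        rw [this]
        have := Real.sin_int_mul_pi (2 * l)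
        push_cast at this ⊢
        convert this using 2
        try ring
      ext i j
      fin_cases i <;> fin_cases j <;> simp [Rot, hc, hs]
  refine ⟨key, key.trans ?_⟩
  constructor
  · rintro ⟨l, hl⟩
    refine ⟨l, ?_⟩
    have hαval : α = l * Real.pi / k := by field_simp; linarith
    rw [← hαval, hcos]
  · rintro ⟨l, hl⟩
    have : Real.cos α = Real.cos ((l : ℝ) * Real.pi / k) := by rw [hcos, hl]
    obtain ⟨n, hn | hn⟩ := Real.cos_eq_cos_iff.1 this
    · refine ⟨l - 2 * n * k, ?_⟩
      have hα' : α = (l : ℝ) * Real.pi / k - 2 * n * Real.pi := by linarith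
      rw [hα']
      push_cast
      field_simp
    · refine ⟨2 * n * k - l, ?_⟩
      have hα' : α = 2 * n * Real.pi - (l : ℝ) * Real.pi / k := by linarith
      rw [hα']
      push_cast
      field_simp
end

section
/- Let 0 < |ρ| < 1 and k ∈ ℤ⁺. The k-th power of the (non-whitened) product Π₂(ρ)Π₁(ρ), where Π₁(ρ) = [[1, -2ρ], [0, -1]] and Π₂(ρ) = [[-1, 0], [-2ρ, 1]], equals the identity matrix if and only if arccos(ρ) = lπ/k for some integer l with 1 ≤ l ≤ k-1. -/
open Matrix Real

theorem product_pow_eq_one_iff (ρ : ℝ) (h0 : 0 < |ρ|) (h1 : |ρ| < 1) (k : ℕ) (hk : 0 < k) :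
    ((!![-1, 0; -2*ρ, 1] : Matrix (Fin 2) (Fin 2) ℝ) * !![1, -2*ρ; 0, -1]) ^ k = 1
      ↔ ∃ l : ℤ, 1 ≤ l ∧ l ≤ (k : ℤ) - 1 ∧ Real.arccos ρ = l * Real.pi / k := by
  have habs := abs_lt.mp h1
  have hρ0 : ρ ≠ 0 := by
    intro h; rw [h, abs_zero] at h0; exact lt_irrefl 0 h0
  set θ := Real.arccos ρ with hθdef
  have hθpos : 0 < θ := Real.arccos_pos.mpr habs.2
  have hθlt : θ < Real.pi := by
    have h' := Real.neg_pi_div_two_lt_arcsin.mpr habs.1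
    rw [hθdef, Real.arccos]
    linarith
  have hcosθ : Real.cos θ = ρ := Real.cos_arccos (le_of_lt habs.1) (le_of_lt habs.2)
  have hsinθ : 0 < Real.sin θ := Real.sin_pos_of_pos_of_lt_pi hθpos hθlt
  set φ := 2 * θ with hφdef
  have hcosφ : Real.cos φ = 2 * ρ ^ 2 - 1 := by
    rw [hφdef, Real.cos_two_mul, hcosθ]
  have hsinφ : Real.sin φ = 2 * Real.sin θ * ρ := by
    rw [hφdef, Real.sin_two_mul, hcosθ]
  have hs : Real.sin φ ≠ 0 := by
    rw [hsinφ]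
    exact mul_ne_zero (mul_ne_zero two_ne_zero (ne_of_gt hsinθ)) hρ0
  have hkR : (k : ℝ) ≠ 0 := Nat.cast_ne_zero.mpr hk.ne'
  have hπ : 0 < Real.pi := Real.pi_pos
  set M : Matrix (Fin 2) (Fin 2) ℝ :=
    (!![-1, 0; -2*ρ, 1] : Matrix (Fin 2) (Fin 2) ℝ) * !![1, -2*ρ; 0, -1] with hMdef
  have hM : M = !![-1, 2*ρ; -2*ρ, 4*ρ^2 - 1] := by
    rw [hMdef]
    ext i j
    fin_cases i <;> fin_cases j <;>
      simp [Matrix.mul_apply, Fin.sum_univ_two] <;> ring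
  have hM2 : M * M = (2 * Real.cos φ) • M - 1 := by
    rw [hM, hcosφ]
    ext i j
    fin_cases i <;> fin_cases j <;>
      simp [Matrix.mul_apply, Fin.sum_univ_two, Matrix.one_apply] <;> ring
  have trig : ∀ x : ℝ, Real.sin ((x+1)*φ) = 2 * Real.sin (x*φ) * Real.cos φ - Real.sin ((x-1)*φ) := by
    intro x
    have h1' : (x+1)*φ = x*φ + φ := by ring
    have h2' : (x-1)*φ = x*φ - φ := by ring
    rw [h1', h2', Real.sin_add, Real.sin_sub]; ring
  have key : ∀ n : ℕ, M ^ n =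
      (Real.sin ((n : ℝ) * φ) / Real.sin φ) • M -
        (Real.sin (((n : ℝ) - 1) * φ) / Real.sin φ) • 1 := by
    intro n
    induction n with
    | zero =>
      have e1 : ((0 : ℕ) : ℝ) * φ = 0 := by norm_num
      have e2 : (((0 : ℕ) : ℝ) - 1) * φ = -φ := by norm_num
      rw [pow_zero, e1, e2, Real.sin_zero, Real.sin_neg]
      rw [zero_div, zero_smul, neg_div, div_self hs]
      simp
    | succ n ih =>
      have hcast : ((n + 1 : ℕ) : ℝ) = (n : ℝ) + 1 := by push_cast; ring
      have e2 : (((n : ℝ) + 1) - 1) * φ = (n : ℝ) * φ := by ring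
      rw [pow_succ, ih, hcast, e2, trig (n : ℝ), sub_mul, smul_mul_assoc, smul_mul_assoc,
        one_mul, hM2]
      match_scalars <;> field_simp <;> ring
  have hcore : M ^ k = 1 ↔
      Real.sin ((k : ℝ) * φ) = 0 ∧ Real.sin (((k : ℝ) - 1) * φ) = -Real.sin φ := by
    rw [key k]
    constructor
    · intro h
      have h01 := congrFun (congrFun h 0) 1
      have h00 := congrFun (congrFun h 0) 0
      rw [hM] at h01 h00
      simp [Matrix.sub_apply, Matrix.smul_apply, Matrix.one_apply, smul_eq_mul] at h01 h00
      have hA : Real.sin ((k : ℝ) * φ) = 0 := by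
        rcases h01 with (h' | h') | h'
        · exact h'
        · exact absurd h' hs
        · exact absurd h' hρ0
      refine ⟨hA, ?_⟩
      rw [hA] at h00
      have hB1 : Real.sin (((k : ℝ) - 1) * φ) / Real.sin φ = -1 := by
        simp at h00
        linarith
      field_simp at hB1
      linarith
    · rintro ⟨hA, hB⟩
      rw [hA, hB, zero_div, zero_smul, neg_div, div_self hs]
      simp
  rw [hcore]
  constructor
  · rintro ⟨hA, hB⟩
    have hsplit : ((k : ℝ) - 1) * φ = (k : ℝ) * φ - φ := by ring
    have hBexp : Real.sin (((k : ℝ) - 1) * φ)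
        = Real.sin ((k : ℝ) * φ) * Real.cos φ - Real.cos ((k : ℝ) * φ) * Real.sin φ := by
      rw [hsplit, Real.sin_sub]
    rw [hBexp, hA, zero_mul, zero_sub] at hB
    have hcos1 : Real.cos ((k : ℝ) * φ) = 1 := by
      have := mul_right_cancel₀ hs (by linarith : Real.cos ((k : ℝ) * φ) * Real.sin φ = 1 * Real.sin φ)
      linarith
    obtain ⟨l, hl⟩ := (Real.cos_eq_one_iff _).mp hcos1
    have hθeq : θ = (l : ℝ) * Real.pi / (k : ℝ) := by
      rw [hφdef] at hl
      field_simp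
      nlinarith [hl]
    refine ⟨l, ?_, ?_, hθeq⟩
    · -- 1 ≤ l
      have hlpos : (0 : ℝ) < (l : ℝ) := by
        by_contra hneg
        push_neg at hneg
        have : (l : ℝ) * Real.pi / (k : ℝ) ≤ 0 := by
          apply div_nonpos_of_nonpos_of_nonneg
          · exact mul_nonpos_of_nonpos_of_nonneg hneg hπ.le
          · positivity
        rw [← hθeq] at this; linarith
      have : (0 : ℤ) < l := by exact_mod_cast hlpos
      omega
    · -- l ≤ k - 1
      have hkpos : (0 : ℝ) < (k : ℝ) := by positivity
      have hlk : (l : ℝ) < (k : ℝ) := by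
        have h' : (l : ℝ) * Real.pi / (k : ℝ) < Real.pi := hθeq ▸ hθlt
        rw [div_lt_iff₀ hkpos] at h'
        nlinarith
      have : l < (k : ℤ) := by exact_mod_cast hlk
      omega
  · rintro ⟨l, hl1, hl2, hl3⟩
    have hkφ : (k : ℝ) * φ = (l : ℝ) * (2 * Real.pi) := by
      rw [hφdef, hl3]
      field_simp
    have hA : Real.sin ((k : ℝ) * φ) = 0 := by
      rw [hkφ]
      have : (l : ℝ) * (2 * Real.pi) = ((2 * l : ℤ) : ℝ) * Real.pi := by push_cast; ring
      rw [this, Real.sin_int_mul_pi]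
    have hcos1 : Real.cos ((k : ℝ) * φ) = 1 := by
      rw [hkφ]; exact Real.cos_int_mul_two_pi l
    refine ⟨hA, ?_⟩
    have hsplit : ((k : ℝ) - 1) * φ = (k : ℝ) * φ - φ := by ring
    rw [hsplit, Real.sin_sub, hA, hcos1]
    ring
end

section
/- Let k ≥ 3 be an integer, ρ = -cos(π/k), α = (k-1)π/k, F = [[0,-1],[-1,0]], and Q the whitening matrix for ρ. Then for every integer j, Q⁻¹ F R(jα) Q = (1/sin(π/k)) · [[sin(jα), sin(jα - π/k)], [-sin(jα + π/k), -sin(jα)]]. -/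
/-!
Write `s = sin θ`, `c = cos θ` with `θ = π / k ∈ (0, π/2)`. Then `√(1 - ρ²) = s` and `sign ρ = -1`,
so `Q = q • !![-c, s - 1; s - 1, -c]` with `q² · 2s²(1 - s) = 1`. Using `s² + c² = 1`, this gives
`det Q = 1 / s`, hence `Q⁻¹ = s • adj Q`, and conjugating `F R(x)` is then an entrywise identity
that holds for every angle `x`.
-/

open Matrix Real

noncomputable def whitening (ρ : ℝ) : Matrix (Fin 2) (Fin 2) ℝ :=
  (Real.sign ρ / √(2 * (1 - ρ ^ 2) * (1 - √(1 - ρ ^ 2)))) •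
    !![ρ, √(1 - ρ ^ 2) - 1; √(1 - ρ ^ 2) - 1, ρ]

def whiteningForm (s c : ℝ) : Matrix (Fin 2) (Fin 2) ℝ :=
  !![-c, s - 1; s - 1, -c]

section WhiteningForm

variable {s c q : ℝ}

theorem det_smul_whiteningForm (hsc : s ^ 2 + c ^ 2 = 1)
    (hq : q ^ 2 * (2 * s ^ 2 * (1 - s)) = 1) :
    (q • whiteningForm s c).det = s⁻¹ := by
  rw [whiteningForm, det_smul, det_fin_two_of, Fintype.card_fin]
  apply eq_inv_of_mul_eq_one_left
  linear_combination hq + q ^ 2 * s * hsc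

theorem inv_smul_whiteningForm (hsc : s ^ 2 + c ^ 2 = 1)
    (hq : q ^ 2 * (2 * s ^ 2 * (1 - s)) = 1) :
    (q • whiteningForm s c)⁻¹ = (s * q) • !![-c, 1 - s; 1 - s, -c] := by
  rw [inv_def, det_smul_whiteningForm hsc hq, Ring.inverse_eq_inv', inv_inv, whiteningForm,
    adjugate_smul, adjugate_fin_two_of, smul_smul]
  simp

theorem smul_whiteningForm_conj_reflection_rotation (hsc : s ^ 2 + c ^ 2 = 1)
    (hq : q ^ 2 * (2 * s ^ 2 * (1 - s)) = 1) (x : ℝ) :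
    (q • whiteningForm s c)⁻¹ * !![0, -1; -1, 0] * !![cos x, sin x; -sin x, cos x] *
        (q • whiteningForm s c)
      = s⁻¹ • !![sin x, sin x * c - cos x * s; -(sin x * c + cos x * s), -sin x] := by
  have hs : s ≠ 0 := by rintro rfl; simp at hq
  rw [inv_smul_whiteningForm hsc hq, whiteningForm]
  simp only [Matrix.smul_mul, Matrix.mul_smul, smul_smul, mul_fin_two]
  ext i j
  fin_cases i <;> fin_cases j <;>
    simp only [Fin.isValue, Fin.zero_eta, Fin.mk_one, Matrix.smul_apply, of_apply, cons_val',
      cons_val_zero, cons_val_one, cons_val_fin_one, smul_eq_mul] <;>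
    field_simp
  · linear_combination sin x * hq + s ^ 2 * q ^ 2 * sin x * hsc
  · linear_combination (c * sin x - s * cos x) * hq - s ^ 2 * q ^ 2 * cos x * hsc
  · linear_combination (-c * sin x - s * cos x) * hq - s ^ 2 * q ^ 2 * cos x * hsc
  · linear_combination -sin x * hq - s ^ 2 * q ^ 2 * sin x * hsc

end WhiteningForm

theorem exists_whitening_neg_cos_eq_smul_whiteningForm {θ : ℝ} (h0 : 0 < θ) (h1 : θ < π / 2) :
    ∃ q : ℝ, q ^ 2 * (2 * sin θ ^ 2 * (1 - sin θ)) = 1 ∧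
      whitening (-cos θ) = q • whiteningForm (sin θ) (cos θ) := by
  have hcos : 0 < cos θ := cos_pos_of_mem_Ioo ⟨by linarith, h1⟩
  have hsin : 0 < sin θ := sin_pos_of_pos_of_lt_pi h0 (by linarith)
  have hsin_lt_one : sin θ < 1 := by nlinarith [sin_sq_add_cos_sq θ]
  have hD : 0 < 2 * sin θ ^ 2 * (1 - sin θ) := by
    have := sub_pos.2 hsin_lt_one
    positivity
  have hρ : 1 - (-cos θ) ^ 2 = sin θ ^ 2 := by rw [neg_sq, sin_sq]
  refine ⟨-1 / √(2 * sin θ ^ 2 * (1 - sin θ)), ?_, ?_⟩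
  · rw [div_pow, sq_sqrt hD.le, neg_one_sq, one_div_mul_cancel hD.ne']
  · rw [whitening, whiteningForm, hρ, sqrt_sq hsin.le, sign_of_neg (neg_neg_of_pos hcos)]

theorem whitening_neg_cos_conj_reflection_rotation {θ : ℝ} (h0 : 0 < θ) (h1 : θ < π / 2)
    (x : ℝ) :
    (whitening (-cos θ))⁻¹ * !![0, -1; -1, 0] * !![cos x, sin x; -sin x, cos x] *
        whitening (-cos θ)
      = (1 / sin θ) • !![sin x, sin (x - θ); -sin (x + θ), -sin x] := by
  obtain ⟨q, hq, hW⟩ := exists_whitening_neg_cos_eq_smul_whiteningForm h0 h1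
  rw [hW, one_div, sin_sub, sin_add]
  exact smul_whiteningForm_conj_reflection_rotation (sin_sq_add_cos_sq θ) hq x

theorem image_rotation_odd_general (k : ℕ) (hk : 3 ≤ k)
    (ρ : ℝ) (hρ : ρ = -Real.cos (Real.pi / k))
    (α : ℝ)
    (q : ℝ) (hq : q = Real.sign ρ / Real.sqrt (2 * (1 - ρ^2) * (1 - Real.sqrt (1 - ρ^2))))
    (Q : Matrix (Fin 2) (Fin 2) ℝ)
    (hQ : Q = q • !![ρ, Real.sqrt (1 - ρ^2) - 1; Real.sqrt (1 - ρ^2) - 1, ρ]) :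
    ∀ j : ℤ,
      Q⁻¹ * !![0, -1; -1, 0] *
        !![Real.cos (j * α), Real.sin (j * α); -Real.sin (j * α), Real.cos (j * α)] * Q
      = (1 / Real.sin (Real.pi / k)) •
        !![Real.sin (j * α), Real.sin (j * α - Real.pi / k);
           -Real.sin (j * α + Real.pi / k), -Real.sin (j * α)] := by
  intro j
  subst hQ hq hρ
  have hk' : (3 : ℝ) ≤ k := by exact_mod_cast hk
  have h0 : 0 < π / k := by positivity
  have h1 : π / k < π / 2 := div_lt_div_of_pos_left pi_pos two_pos (by linarith)
  exact whitening_neg_cos_conj_reflection_rotation h0 h1 _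

theorem image_rotation_odd (k : ℕ) (hk : 3 ≤ k)
    (ρ : ℝ) (hρ : ρ = -Real.cos (Real.pi / k))
    (α : ℝ) (hα : α = (k - 1) * Real.pi / k)
    (q : ℝ) (hq : q = Real.sign ρ / Real.sqrt (2 * (1 - ρ^2) * (1 - Real.sqrt (1 - ρ^2))))
    (Q : Matrix (Fin 2) (Fin 2) ℝ)
    (hQ : Q = q • !![ρ, Real.sqrt (1 - ρ^2) - 1; Real.sqrt (1 - ρ^2) - 1, ρ]) :
    ∀ j : ℤ,
      Q⁻¹ * !![0, -1; -1, 0] *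
        !![Real.cos (j * α), Real.sin (j * α); -Real.sin (j * α), Real.cos (j * α)] * Q
      = (1 / Real.sin (Real.pi / k)) •
        !![Real.sin (j * α), Real.sin (j * α - Real.pi / k);
           -Real.sin (j * α + Real.pi / k), -Real.sin (j * α)] :=
  image_rotation_odd_general k hk ρ hρ α q hq Q hQ
end

section
/- Let μ, s⁰, sʲ ∈ ℝ², Σ a 2×2 positive definite symmetric real matrix with Λ = Σ⁻¹, and let N(m, tΣ)(x) denote the bivariate Gaussian density (1/(2πt√det Σ))·exp(-(x-m)ᵀΛ(x-m)/(2t)). Suppose sⁱ and sʲ satisfy sⁱᵀΛsⁱ = sʲᵀΛsʲ and e₁ᵀΛsⁱ = e₁ᵀΛsʲ. Then for all t > 0 and all x with x₂ = 0, the identity aᵢ·N(sⁱ + μt, tΣ)(x) = -aⱼ·N(sʲ + μt, tΣ)(x) holds when aⱼ = -aᵢ·exp(μᵀΛ(sʲ - sⁱ)). -/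
/-!
Expanding the quadratic form, `Q(x - tμ - sʲ) - Q(x - tμ - sⁱ)` is `Q(sʲ) - Q(sⁱ)` minus the cross
term `2 (x - tμ)ᵀΛ(sʲ - sⁱ)`. The first difference vanishes by assumption, and on the boundary
`x = x₁ e₁` so `xᵀΛ(sʲ - sⁱ) = 0`; what is left is `2t μᵀΛ(sʲ - sⁱ)`, which the exponential turns
into exactly the factor relating `aⱼ` to `aᵢ`.
-/

open Matrix Real

namespace Matrix

variable {n R : Type*} [Fintype n] [CommRing R] {Λ : Matrix n n R}

lemma IsSymm.dotProduct_mulVec_comm (hΛ : Λ.IsSymm) (v w : n → R) :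
    v ⬝ᵥ (Λ *ᵥ w) = w ⬝ᵥ (Λ *ᵥ v) := by
  rw [dotProduct_mulVec, ← vecMul_transpose, hΛ.eq, dotProduct_comm]

lemma IsSymm.dotProduct_mulVec_sub_self_sub (hΛ : Λ.IsSymm) (v a b : n → R) :
    (v - b) ⬝ᵥ (Λ *ᵥ (v - b)) =
      (v - a) ⬝ᵥ (Λ *ᵥ (v - a)) + (b ⬝ᵥ (Λ *ᵥ b) - a ⬝ᵥ (Λ *ᵥ a))
        - 2 * (v ⬝ᵥ (Λ *ᵥ (b - a))) := by
  have hb := hΛ.dotProduct_mulVec_comm b v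
  have ha := hΛ.dotProduct_mulVec_comm a v
  simp only [mulVec_sub, dotProduct_sub, sub_dotProduct] at hb ha ⊢
  linear_combination ha - hb

end Matrix

theorem image_cancellation_on_boundary_general
    (Sig : Matrix (Fin 2) (Fin 2) ℝ) (hSym : Sig.IsSymm)
    (Λ : Matrix (Fin 2) (Fin 2) ℝ) (hΛ : Λ = Sig⁻¹)
    (μ si sj : Fin 2 → ℝ)
    (hquad : si ⬝ᵥ (Λ *ᵥ si) = sj ⬝ᵥ (Λ *ᵥ sj))
    (hlin : (![1, 0] : Fin 2 → ℝ) ⬝ᵥ (Λ *ᵥ si) = (![1, 0] : Fin 2 → ℝ) ⬝ᵥ (Λ *ᵥ sj))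
    (N : (Fin 2 → ℝ) → ℝ → (Fin 2 → ℝ) → ℝ)
    (hN : ∀ m t x, N m t x =
      (1 / (2 * Real.pi * t * Real.sqrt Sig.det)) *
        Real.exp (-((x - m) ⬝ᵥ (Λ *ᵥ (x - m))) / (2 * t)))
    (ai aj : ℝ) (haj : aj = -ai * Real.exp (μ ⬝ᵥ (Λ *ᵥ (sj - si)))) :
    ∀ t : ℝ, 0 < t → ∀ x : Fin 2 → ℝ, x 1 = 0 →
      ai * N (si + t • μ) t x = -aj * N (sj + t • μ) t x := by
  intro t ht x hx
  have hΛsym : Λ.IsSymm := hΛ ▸ hSym.inv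
  have hx_axis : x = x 0 • ![1, 0] := by
    ext i; fin_cases i <;> simp [hx]
  have hcross : x ⬝ᵥ (Λ *ᵥ (sj - si)) = 0 := by
    rw [hx_axis, smul_dotProduct, mulVec_sub, dotProduct_sub, hlin, sub_self, smul_zero]
  have hQ : (x - (sj + t • μ)) ⬝ᵥ (Λ *ᵥ (x - (sj + t • μ))) =
      (x - (si + t • μ)) ⬝ᵥ (Λ *ᵥ (x - (si + t • μ))) + 2 * t * (μ ⬝ᵥ (Λ *ᵥ (sj - si))) := by
    simp only [sub_add_eq_sub_sub_swap]
    rw [hΛsym.dotProduct_mulVec_sub_self_sub _ si sj, hquad, sub_dotProduct x, hcross,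
      smul_dotProduct, smul_eq_mul]
    ring
  have hexp : -((x - (si + t • μ)) ⬝ᵥ (Λ *ᵥ (x - (si + t • μ)))) / (2 * t) =
      μ ⬝ᵥ (Λ *ᵥ (sj - si)) + -((x - (sj + t • μ)) ⬝ᵥ (Λ *ᵥ (x - (sj + t • μ)))) / (2 * t) := by
    rw [hQ]; field_simp; ring
  rw [hN, hN, haj, hexp, Real.exp_add]
  ring

theorem image_cancellation_on_boundary
    (Sig : Matrix (Fin 2) (Fin 2) ℝ) (hSym : Sig.IsSymm) (hPD : Sig.PosDef)
    (Λ : Matrix (Fin 2) (Fin 2) ℝ) (hΛ : Λ = Sig⁻¹)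
    (μ si sj : Fin 2 → ℝ)
    (hquad : si ⬝ᵥ (Λ *ᵥ si) = sj ⬝ᵥ (Λ *ᵥ sj))
    (hlin : (![1, 0] : Fin 2 → ℝ) ⬝ᵥ (Λ *ᵥ si) = (![1, 0] : Fin 2 → ℝ) ⬝ᵥ (Λ *ᵥ sj))
    (N : (Fin 2 → ℝ) → ℝ → (Fin 2 → ℝ) → ℝ)
    (hN : ∀ m t x, N m t x =
      (1 / (2 * Real.pi * t * Real.sqrt Sig.det)) *
        Real.exp (-((x - m) ⬝ᵥ (Λ *ᵥ (x - m))) / (2 * t)))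
    (ai aj : ℝ) (haj : aj = -ai * Real.exp (μ ⬝ᵥ (Λ *ᵥ (sj - si)))) :
    ∀ t : ℝ, 0 < t → ∀ x : Fin 2 → ℝ, x 1 = 0 →
      ai * N (si + t • μ) t x = -aj * N (sj + t • μ) t x :=
  image_cancellation_on_boundary_general Sig hSym Λ hΛ μ si sj hquad hlin N hN ai aj haj
end
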